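/- Let G be a finite simple graph with a proper k-coloring φ. Suppose A ⊆ E(G) is an edge set such that for every pair of distinct colors i, j ∈ {1,…,k}, the set A ∩ E(G_{ij}) contains no cycle (i.e., is an acyclic edge set of G_{ij}). Then there exists a 2CC transversal E' ⊆ E(G) \ A with respect to φ satisfying |E'| = m(G, φ). -/

import Mathlib

/-!
A set `E` is a 2CC transversal exactly when `G_{ij} - E` is a forest for every pair of colours
`i ≠ j`. Take a minimum transversal `E` with as few edges in `A` as possible.
If `e ∈ E ∩ A` had colours `i, j`, then `E - e` is not a transversal, so `e` closes a cycle in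
`G_{ij} - E`. Since `A ∩ E(G_{ij})` is acyclic, this cycle has an edge `f ∉ A`, and by the
exchange property of forests `E - e + f` is again a minimum transversal, with fewer edges in `A`.
-/

open SimpleGraph
open scoped Classical

namespace DefectiveAcyclic

variable {V : Type*}

/-- A proper coloring of `G` by natural-number colors. -/
def IsProperColoring (G : SimpleGraph V) (φ : V → ℕ) : Prop :=
  ∀ ⦃u v : V⦄, G.Adj u v → φ u ≠ φ v

/-- A proper `k`-coloring, where the colors used are from `{1, …, k}`. -/
def IsProperKColoring (k : ℕ) (G : SimpleGraph V) (φ : V → ℕ) : Prop :=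
  IsProperColoring G φ ∧ ∀ v : V, φ v ∈ Finset.Icc 1 k

/-- `G`, together with the coloring `φ`, has no cycle whose vertices receive
exactly two colors. -/
def NoTwoColoredCycle [DecidableEq V] (G : SimpleGraph V) (φ : V → ℕ) : Prop :=
  ∀ (v : V) (c : G.Walk v v), c.IsCycle → (c.support.toFinset.image φ).card ≠ 2

/-- A 2CC transversal with respect to `φ`: a set of edges of `G` whose removal destroys
all 2-colored cycles. -/
def IsTwoCCTransversal [DecidableEq V] (G : SimpleGraph V) (φ : V → ℕ)
    (E' : Set (Sym2 V)) : Prop :=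
  E' ⊆ G.edgeSet ∧ NoTwoColoredCycle (G.deleteEdges E') φ

/-- `m(G, φ)`: minimum size of a 2CC transversal with respect to `φ`. -/
noncomputable def mParam [DecidableEq V] (G : SimpleGraph V) (φ : V → ℕ) : ℕ :=
  sInf {m : ℕ | ∃ E' : Finset (Sym2 V), IsTwoCCTransversal G φ ↑E' ∧ E'.card = m}

/-- `H` is a minor of `G`: there are disjoint connected branch sets in `G`, one for each
vertex of `H`, with edges of `G` between branch sets corresponding to the edges of `H`. -/
def HasMinor {W : Type*} (G : SimpleGraph V) (H : SimpleGraph W) : Prop :=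
  ∃ ρ : V → Option W,
    (∀ w : W, ∃ v : V, ρ v = some w) ∧
    (∀ w : W, (G.induce {v : V | ρ v = some w}).Connected) ∧
    (∀ w₁ w₂ : W, H.Adj w₁ w₂ →
      ∃ v₁ v₂ : V, G.Adj v₁ v₂ ∧ ρ v₁ = some w₁ ∧ ρ v₂ = some w₂)

/-- Planarity, via Wagner's theorem: a graph is planar iff it has neither a `K₅` minor
nor a `K₃,₃` minor. -/
def IsPlanar (G : SimpleGraph V) : Prop :=
  ¬ HasMinor G (⊤ : SimpleGraph (Fin 5)) ∧
  ¬ HasMinor G (completeBipartiteGraph (Fin 3) (Fin 3))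

/-- A plane triangulation (on at least 3 vertices) is the same as a maximal planar graph:
planar, and no edge can be added while keeping it planar and simple. -/
def IsPlaneTriangulation [Fintype V] (G : SimpleGraph V) : Prop :=
  3 ≤ Fintype.card V ∧ IsPlanar G ∧
    ∀ u v : V, u ≠ v → ¬ G.Adj u v →
      ¬ IsPlanar (G ⊔ SimpleGraph.fromEdgeSet {s(u, v)})

/-- `T` is a triangle of `G`. -/
def IsTriangle (G : SimpleGraph V) (T : Finset V) : Prop :=
  T.card = 3 ∧ ∀ u ∈ T, ∀ v ∈ T, u ≠ v → G.Adj u v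

/-- `T` is a separating triangle of `G`: deleting its vertices disconnects `G`. -/
def IsSeparatingTriangle (G : SimpleGraph V) (T : Finset V) : Prop :=
  IsTriangle G T ∧ ¬ (G.induce {v : V | v ∉ T}).Preconnected

def NoSeparatingTriangle (G : SimpleGraph V) : Prop :=
  ∀ T : Finset V, ¬ IsSeparatingTriangle G T

/-- A member of `𝒱_G`: a maximal connected (induced) subgraph of `G` without
separating triangles. -/
def IsPiece [Fintype V] (G : SimpleGraph V) (S : Finset V) : Prop :=
  (G.induce (↑S : Set V)).Connected ∧ NoSeparatingTriangle (G.induce (↑S : Set V)) ∧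
    ∀ S' : Finset V, S ⊆ S' → (G.induce (↑S' : Set V)).Connected →
      NoSeparatingTriangle (G.induce (↑S' : Set V)) → S = S'

/-- `𝒱_G` as a finset of vertex sets. -/
noncomputable def pieces [Fintype V] (G : SimpleGraph V) : Finset (Finset V) :=
  Finset.univ.filter (fun S : Finset V => IsPiece G S)

/-- `G` is `k`-connected. -/
def IsKConnected [Fintype V] (k : ℕ) (G : SimpleGraph V) : Prop :=
  k < Fintype.card V ∧
    ∀ S : Finset V, S.card < k → (G.induce {v : V | v ∉ S}).Connected

/-- In a plane triangulation (equivalently, a maximal planar graph, which has an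
essentially unique embedding), the facial cycles are exactly the non-separating
triangles. -/
def IsFacialTriangle (G : SimpleGraph V) (F : Finset V) : Prop :=
  IsTriangle G F ∧ (G.induce {v : V | v ∉ F}).Preconnected

/-- `E'` is a `U`-acyclic edge set: the subgraph formed by the edges of `E'` is a forest
containing no path joining two distinct vertices of `U`. -/
def IsUAcyclic (U : Set V) (E' : Set (Sym2 V)) : Prop :=
  (SimpleGraph.fromEdgeSet E').IsAcyclic ∧
    ∀ u ∈ U, ∀ v ∈ U, u ≠ v → ¬ (SimpleGraph.fromEdgeSet E').Reachable u v

/-- An acyclic `k`-coloring: proper, with no 2-colored cycle. -/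
def IsAcyclicKColoring [DecidableEq V] (k : ℕ) (G : SimpleGraph V) (φ : V → ℕ) : Prop :=
  IsProperKColoring k G φ ∧ NoTwoColoredCycle G φ

/-- `m_k(G)`: the minimum of `m(G, φ)` over all proper `k`-colorings `φ` of `G`
(`∞` if there is none). -/
noncomputable def mkParam [DecidableEq V] (k : ℕ) (G : SimpleGraph V) : ℕ∞ :=
  sInf {x : ℕ∞ | ∃ φ : V → ℕ, IsProperKColoring k G φ ∧ x = (mParam G φ : ℕ∞)}

/-- The edges of `G_{ij}` are those of `G` lying in this set. -/
def colorPairEdges (φ : V → ℕ) (i j : ℕ) : Set (Sym2 V) :=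
  {e | ∀ v ∈ e, φ v = i ∨ φ v = j}

lemma IsProperColoring.anti {G H : SimpleGraph V} {φ : V → ℕ} (hHG : H ≤ G)
    (hφ : IsProperColoring G φ) : IsProperColoring H φ :=
  fun _ _ h ↦ hφ (hHG h)

lemma Reachable.of_sup_edge {G : SimpleGraph V} {u v x y : V} (huv : G.Reachable u v)
    (h : (G ⊔ edge u v).Reachable x y) : G.Reachable x y := by
  rw [reachable_iff_reflTransGen] at h
  induction h with
  | refl => rfl
  | tail _ hab ih =>
    refine ih.trans ?_
    rcases hab with hab | hab
    · exact hab.reachable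
    · obtain ⟨⟨rfl, rfl⟩ | ⟨rfl, rfl⟩, -⟩ := (edge_adj _ _ _ _).mp hab
      exacts [huv, huv.symm]

lemma Walk.mem_edgeSet_fromEdgeSet {H : SimpleGraph V} {a b : V} {p : H.Walk a b}
    {T : Set (Sym2 V)} (hT : ∀ e ∈ p.edges, e ∈ T) :
    ∀ e ∈ p.edges, e ∈ (fromEdgeSet T).edgeSet := fun e he ↦ by
  rw [edgeSet_fromEdgeSet]
  exact ⟨hT e he, H.not_isDiag_of_mem_edgeSet (p.edges_subset_edgeSet he)⟩

/-- Basis exchange in the cycle matroid. -/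
lemma isAcyclic_fromEdgeSet_insert_diff {S : Set (Sym2 V)} (hS : (fromEdgeSet S).IsAcyclic)
    {e f : Sym2 V} {w : V} {c : (fromEdgeSet (insert e S)).Walk w w} (hc : c.IsCycle)
    (hf : f ∈ c.edges) : (fromEdgeSet (insert e S \ {f})).IsAcyclic := by
  intro z d hd
  have hdS : ∀ e' ∈ d.edges, e' ∈ insert e S \ {f} := fun e' he' ↦
    (edgeSet_fromEdgeSet _ ▸ d.edges_subset_edgeSet he').1
  induction e using Sym2.ind with | _ u v => ?_
  induction f using Sym2.ind with | _ x y => ?_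
  by_cases he : s(u, v) ∈ d.edges
  swap
  · refine hS (d.transfer _ (Walk.mem_edgeSet_fromEdgeSet fun e' he' ↦ ?_)) (hd.transfer _)
    exact (hdS e' he').1.resolve_left fun h ↦ he (h ▸ he')
  have hsub : ∀ e' ∈ insert s(u, v) S \ {s(x, y)}, e' ≠ s(u, v) → e' ∈ S \ {s(x, y)} :=
    fun e' he' hne ↦ ⟨he'.1.resolve_left hne, he'.2⟩
  have huv : (fromEdgeSet (S \ {s(x, y)})).Reachable u v := by
    refine (adj_and_reachable_delete_edges_iff_exists_cycle.mpr ⟨z, d, hd, he⟩).2.mono ?_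
    intro a b hab
    simp only [deleteEdges_adj, fromEdgeSet_adj, Set.mem_singleton_iff] at hab ⊢
    exact ⟨hsub _ hab.1.1 hab.2, hab.1.2⟩
  have hxyS : s(x, y) ∈ S := by
    refine ((fromEdgeSet_adj _).mp (c.adj_of_mem_edges hf)).1.resolve_left fun h ↦ ?_
    exact (hdS _ he).2 h.symm
  have hxy : (fromEdgeSet (S \ {s(x, y)})).Reachable x y := by
    refine Reachable.of_sup_edge huv
      ((adj_and_reachable_delete_edges_iff_exists_cycle.mpr ⟨w, c, hc, hf⟩).2.mono ?_)
    intro a b hab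
    simp only [deleteEdges_adj, fromEdgeSet_adj, Set.mem_singleton_iff] at hab
    by_cases hne : s(a, b) = s(u, v)
    · exact Or.inr ((fromEdgeSet_adj _).mpr ⟨hne, hab.1.2⟩)
    · exact Or.inl ((fromEdgeSet_adj _).mpr ⟨hsub _ ⟨hab.1.1, hab.2⟩ hne, hab.1.2⟩)
  have hbridge := isAcyclic_iff_forall_adj_isBridge.mp hS
    ((fromEdgeSet_adj _).mpr ⟨hxyS, (c.adj_of_mem_edges hf).ne⟩)
  rw [isBridge_iff, deleteEdges, ← fromEdgeSet_sdiff] at hbridge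
  exact hbridge hxy

lemma mem_colorPairEdges_of_mem_edges [DecidableEq V] {H : SimpleGraph V} {φ : V → ℕ}
    {a b u v : V} {p : H.Walk a b} (hp : (p.support.toFinset.image φ).card = 2)
    (huv : s(u, v) ∈ p.edges) (hφuv : φ u ≠ φ v) {e : Sym2 V} (he : e ∈ p.edges) :
    e ∈ colorPairEdges φ (φ u) (φ v) := by
  have hcolors : p.support.toFinset.image φ = {φ u, φ v} := by
    refine (Finset.eq_of_subset_of_card_le (fun i hi ↦ ?_)
      (by rw [hp, Finset.card_pair hφuv])).symm
    rcases Finset.mem_insert.mp hi with rfl | hi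
    · exact Finset.mem_image_of_mem φ (List.mem_toFinset.mpr (p.fst_mem_support_of_mem_edges huv))
    · rw [Finset.mem_singleton.mp hi]
      exact Finset.mem_image_of_mem φ (List.mem_toFinset.mpr (p.snd_mem_support_of_mem_edges huv))
  intro x hx
  have := Finset.mem_image_of_mem φ (List.mem_toFinset.mpr (p.mem_support_of_mem_edges he hx))
  simpa [hcolors] using this

/-- Under a proper colouring, a cycle all of whose edges join colours `i ≠ j` is 2-coloured. -/
lemma isAcyclic_fromEdgeSet_inter_colorPairEdges {H : SimpleGraph V} [DecidableEq V]
    {φ : V → ℕ} (hφ : IsProperColoring H φ) (hH : NoTwoColoredCycle H φ) {i j : ℕ}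
    (hij : i ≠ j) :
    (fromEdgeSet (H.edgeSet ∩ colorPairEdges φ i j)).IsAcyclic := by
  intro w c hc
  have hcH : ∀ e ∈ c.edges, e ∈ H.edgeSet ∩ colorPairEdges φ i j := fun e he ↦
    (edgeSet_fromEdgeSet _ ▸ c.edges_subset_edgeSet he).1
  have hsub : ∀ e ∈ c.edges, e ∈ H.edgeSet := fun e he ↦ (hcH e he).1
  refine hH w (c.transfer H hsub) (hc.transfer hsub) ?_
  rw [Walk.support_transfer]
  have hcolors : c.support.toFinset.image φ ⊆ {i, j} := by
    intro k hk
    obtain ⟨x, hx, rfl⟩ := Finset.mem_image.mp hk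
    obtain ⟨e, he, hxe⟩ :=
      (Walk.mem_support_iff_exists_mem_edges_of_not_nil hc.not_nil).mp (List.mem_toFinset.mp hx)
    rcases (hcH e he).2 x hxe with h | h <;> simp [h]
  have htwo : 1 < (c.support.toFinset.image φ).card := by
    cases c with
    | nil => exact absurd hc Walk.not_isCycle_nil
    | cons h q =>
      refine Finset.one_lt_card.mpr ⟨_, Finset.mem_image_of_mem φ (by simp), _,
        Finset.mem_image_of_mem φ (by simp), hφ ((fromEdgeSet_adj _).mp h).1.1⟩
  have := Finset.card_le_card hcolors
  rw [Finset.card_pair hij] at this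
  omega

section Transversal

variable [DecidableEq V] {G : SimpleGraph V} {φ : V → ℕ}

lemma mem_edges_of_noTwoColoredCycle {E E' : Set (Sym2 V)} {e : Sym2 V}
    (hE : NoTwoColoredCycle (G.deleteEdges E) φ) (hEE' : E \ {e} ⊆ E') {w : V}
    {c : (G.deleteEdges E').Walk w w} (hc : c.IsCycle)
    (hc2 : (c.support.toFinset.image φ).card = 2) : e ∈ c.edges := by
  by_contra he
  have hsub : ∀ e' ∈ c.edges, e' ∈ (G.deleteEdges E).edgeSet := fun e' he' ↦ by
    obtain ⟨hG, hE'⟩ := edgeSet_deleteEdges E' ▸ c.edges_subset_edgeSet he'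
    rw [edgeSet_deleteEdges]
    exact ⟨hG, fun hE ↦ hE' (hEE' ⟨hE, fun h ↦ he (h ▸ he')⟩)⟩
  exact hE w (c.transfer _ hsub) (hc.transfer hsub) (by rwa [Walk.support_transfer])

lemma mem_insert_edgeSet_inter_colorPairEdges {E E' : Set (Sym2 V)} {u v : V}
    (hEE' : E \ {s(u, v)} ⊆ E') {w : V} {c : (G.deleteEdges E').Walk w w}
    (hc2 : (c.support.toFinset.image φ).card = 2) (huv : s(u, v) ∈ c.edges)
    (hφuv : φ u ≠ φ v) {e : Sym2 V} (he : e ∈ c.edges) :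
    e ∈ insert s(u, v) ((G.deleteEdges E).edgeSet ∩ colorPairEdges φ (φ u) (φ v)) \ E' := by
  obtain ⟨hG, hE'⟩ := edgeSet_deleteEdges E' ▸ c.edges_subset_edgeSet he
  refine ⟨?_, hE'⟩
  by_cases heuv : e = s(u, v)
  · exact Or.inl heuv
  · refine Or.inr ⟨?_, mem_colorPairEdges_of_mem_edges hc2 huv hφuv he⟩
    rw [edgeSet_deleteEdges]
    exact ⟨hG, fun hE ↦ hE' (hEE' ⟨hE, heuv⟩)⟩

/-- Both `c` and any 2-coloured cycle surviving the swap pass through `e`, so they lie in the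
forest `G_{ij} - E` with `e` added, the second one avoiding `f`. -/
lemma noTwoColoredCycle_deleteEdges_insert_diff (hφ : IsProperColoring G φ) {E : Set (Sym2 V)}
    (hE : NoTwoColoredCycle (G.deleteEdges E) φ) {e f : Sym2 V} {w : V}
    {c : (G.deleteEdges (E \ {e})).Walk w w} (hc : c.IsCycle)
    (hc2 : (c.support.toFinset.image φ).card = 2) (hf : f ∈ c.edges) :
    NoTwoColoredCycle (G.deleteEdges (insert f (E \ {e}))) φ := by
  intro z d hd hd2
  have hec : e ∈ c.edges := mem_edges_of_noTwoColoredCycle hE subset_rfl hc hc2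
  have hed : e ∈ d.edges :=
    mem_edges_of_noTwoColoredCycle hE (Set.subset_insert _ _) hd hd2
  induction e using Sym2.ind with | _ u v => ?_
  have hφuv : φ u ≠ φ v := hφ (deleteEdges_adj.mp (c.adj_of_mem_edges hec)).1
  set S := (G.deleteEdges E).edgeSet ∩ colorPairEdges φ (φ u) (φ v)
  have hS : (fromEdgeSet S).IsAcyclic :=
    isAcyclic_fromEdgeSet_inter_colorPairEdges (hφ.anti (deleteEdges_le _)) hE hφuv
  have hcS : ∀ e' ∈ c.edges, e' ∈ insert s(u, v) S := fun e' he' ↦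
    (mem_insert_edgeSet_inter_colorPairEdges subset_rfl hc2 hec hφuv he').1
  have hdS : ∀ e' ∈ d.edges, e' ∈ insert s(u, v) S \ {f} := fun e' he' ↦ by
    obtain ⟨h, hf'⟩ :=
      mem_insert_edgeSet_inter_colorPairEdges (Set.subset_insert _ _) hd2 hed hφuv he'
    exact ⟨h, fun h' ↦ hf' (Or.inl h')⟩
  have hacyc : (fromEdgeSet (insert s(u, v) S \ {f})).IsAcyclic :=
    isAcyclic_fromEdgeSet_insert_diff hS (hc.transfer (Walk.mem_edgeSet_fromEdgeSet hcS))
      (by rwa [Walk.edges_transfer])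
  exact hacyc _ (hd.transfer (Walk.mem_edgeSet_fromEdgeSet hdS))

lemma isTwoCCTransversal_edgeSet : IsTwoCCTransversal G φ G.edgeSet := by
  refine ⟨subset_rfl, fun v c hc ↦ ?_⟩
  cases c with
  | nil => exact absurd hc Walk.not_isCycle_nil
  | cons h _ => exact absurd (deleteEdges_adj.mp h).1 (deleteEdges_adj.mp h).2

lemma exists_isTwoCCTransversal_card_eq_mParam [Fintype G.edgeSet] :
    ∃ E : Finset (Sym2 V), IsTwoCCTransversal G φ ↑E ∧ E.card = mParam G φ :=
  Nat.sInf_mem (s := {m | ∃ E : Finset (Sym2 V), IsTwoCCTransversal G φ ↑E ∧ E.card = m})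
    ⟨_, G.edgeFinset, by rw [coe_edgeFinset]; exact isTwoCCTransversal_edgeSet, rfl⟩

lemma mParam_le_card {E : Finset (Sym2 V)} (hE : IsTwoCCTransversal G φ ↑E) :
    mParam G φ ≤ E.card :=
  Nat.sInf_le ⟨E, hE, rfl⟩

lemma exists_isTwoCCTransversal_insert_erase (hφ : IsProperColoring G φ) {E : Finset (Sym2 V)}
    (hE : IsTwoCCTransversal G φ ↑E) (hEmin : E.card = mParam G φ) {A : Set (Sym2 V)}
    {u v : V} (huvE : s(u, v) ∈ E) (huvA : s(u, v) ∈ A)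
    (hA : (fromEdgeSet (A ∩ colorPairEdges φ (φ u) (φ v))).IsAcyclic) :
    ∃ f ∉ A, f ∉ E ∧ IsTwoCCTransversal G φ ↑(insert f (E.erase s(u, v))) := by
  have hnot : ¬ NoTwoColoredCycle (G.deleteEdges (↑E \ {s(u, v)})) φ := fun h ↦ by
    rw [← Finset.coe_erase] at h
    have := mParam_le_card ⟨(Finset.coe_subset.mpr (E.erase_subset _)).trans hE.1, h⟩
    have := Finset.card_erase_lt_of_mem huvE
    omega
  simp only [NoTwoColoredCycle, not_forall, not_not] at hnot
  obtain ⟨w, c, hc, hc2⟩ := hnot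
  have huvc : s(u, v) ∈ c.edges := mem_edges_of_noTwoColoredCycle hE.2 subset_rfl hc hc2
  have hφuv : φ u ≠ φ v := hφ (deleteEdges_adj.mp (c.adj_of_mem_edges huvc)).1
  obtain ⟨f, hfc, hfA⟩ : ∃ f ∈ c.edges, f ∉ A := by
    by_contra! hcA
    have hcA' : ∀ e ∈ c.edges, e ∈ A ∩ colorPairEdges φ (φ u) (φ v) := fun e he ↦
      ⟨hcA e he, mem_colorPairEdges_of_mem_edges hc2 huvc hφuv he⟩
    exact hA _ (hc.transfer (Walk.mem_edgeSet_fromEdgeSet hcA'))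
  obtain ⟨hfG, hfE⟩ := edgeSet_deleteEdges _ ▸ c.edges_subset_edgeSet hfc
  refine ⟨f, hfA, fun hf ↦ hfE ⟨hf, fun h ↦ hfA (h ▸ huvA)⟩, ?_, ?_⟩
  · rw [Finset.coe_insert, Finset.coe_erase]
    exact Set.insert_subset hfG (Set.sdiff_subset.trans hE.1)
  · rw [Finset.coe_insert, Finset.coe_erase]
    exact noTwoColoredCycle_deleteEdges_insert_diff hφ hE.2 hc hc2 hfc

end Transversal

theorem statement_0_general {V : Type*} [Fintype V] [DecidableEq V] (G : SimpleGraph V)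
    (k : ℕ) (φ : V → ℕ) (hφ : IsProperKColoring k G φ)
    (A : Set (Sym2 V))
    (hAacyc : ∀ i ∈ Finset.Icc 1 k, ∀ j ∈ Finset.Icc 1 k, i ≠ j →
      (SimpleGraph.fromEdgeSet
        (A ∩ {e : Sym2 V | ∀ v ∈ e, φ v = i ∨ φ v = j})).IsAcyclic) :
    ∃ E' : Finset (Sym2 V), ↑E' ⊆ G.edgeSet \ A ∧
      IsTwoCCTransversal G φ ↑E' ∧ E'.card = mParam G φ := by
  obtain ⟨E, ⟨hE, hEmin⟩, hEA⟩ := Set.exists_min_image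
    {E : Finset (Sym2 V) | IsTwoCCTransversal G φ ↑E ∧ E.card = mParam G φ}
    (fun E ↦ (E.filter (· ∈ A)).card) (Set.toFinite _) exists_isTwoCCTransversal_card_eq_mParam
  refine ⟨E, fun e he ↦ ⟨hE.1 he, fun heA ↦ ?_⟩, hE, hEmin⟩
  induction e using Sym2.ind with | _ u v => ?_
  obtain ⟨f, hfA, hfE, hE'⟩ := exists_isTwoCCTransversal_insert_erase hφ.1 hE hEmin he heA
    (hAacyc _ (hφ.2 u) _ (hφ.2 v) (hφ.1 (hE.1 he)))
  have hcard : (insert f (E.erase s(u, v))).card = mParam G φ := by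
    rw [Finset.card_insert_of_notMem (fun h ↦ hfE (Finset.mem_of_mem_erase h)),
      Finset.card_erase_of_mem he, hEmin.symm]
    have := Finset.card_pos.mpr ⟨_, he⟩
    omega
  have hfewer :
      ((insert f (E.erase s(u, v))).filter (· ∈ A)).card < (E.filter (· ∈ A)).card := by
    rw [Finset.filter_insert, if_neg hfA, Finset.filter_erase]
    exact Finset.card_erase_lt_of_mem (Finset.mem_filter.mpr ⟨he, heA⟩)
  exact (hfewer.trans_le (hEA _ ⟨hE', hcard⟩)).false

/-- Lemma: 2CC transversal avoiding an acyclic edge set `A`. -/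
theorem statement_0 {V : Type*} [Fintype V] [DecidableEq V] (G : SimpleGraph V)
    (k : ℕ) (φ : V → ℕ) (hφ : IsProperKColoring k G φ)
    (A : Set (Sym2 V)) (hA : A ⊆ G.edgeSet)
    (hAacyc : ∀ i ∈ Finset.Icc 1 k, ∀ j ∈ Finset.Icc 1 k, i ≠ j →
      (SimpleGraph.fromEdgeSet
        (A ∩ {e : Sym2 V | ∀ v ∈ e, φ v = i ∨ φ v = j})).IsAcyclic) :
    ∃ E' : Finset (Sym2 V), ↑E' ⊆ G.edgeSet \ A ∧
      IsTwoCCTransversal G φ ↑E' ∧ E'.card = mParam G φ :=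
  statement_0_general G k φ hφ A hAacyc

end DefectiveAcyclic
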